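/- arXiv:2203.10477 — 3 statements merged into one kernel-verified Lean document; each statement's English description precedes it below -/
import Mathlib

section
/- Let a > 0, c < d, and T > 0. Suppose u and v are classical solutions of the 1-D wave equation with speed a on [c, d] × [0, T] such that u(x,0) = v(x,0) and ∂u/∂t(x,0) = ∂v/∂t(x,0) for all x ∈ [c, d], u(c,t) = v(c,t) for all t ∈ [0, T] (equal Dirichlet data at the left end), and ∂u/∂x(d,t) = ∂v/∂x(d,t) for all t ∈ [0, T] (equal Neumann flux data at the right end). Then u(x,t) = v(x,t) for all (x,t) ∈ [c, d] × [0, T]. -/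
/-!
Energy method. The difference `w = u - v` solves the wave equation with zero initial data, zero
Dirichlet data at `c` and zero Neumann data at `d`. Its energy
`E(t) = ∫_c^d (w_t² + a² w_x²) dx` satisfies `∂_t (w_t² + a² w_x²) = ∂_x (2a² w_t w_x)` (by the wave
equation and the symmetry of mixed partials), so `E'(t) = 2a² [w_t w_x]_c^d = 0`, because `w_t`
vanishes at `x = c` and `w_x` at `x = d`. Since `E(0) = 0`, the nonnegative continuous integrand
vanishes, so `w_t ≡ 0` and `w(x, t) = w(x, 0) = 0`.
-/

open Set Filter Topology
open scoped Interval

/-- `p` is a classical solution of the 1-D wave equation with speed `a` on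
`[c, d] × [T₀, T₁]`: it is twice continuously differentiable on an open
neighbourhood of the rectangle and satisfies
`∂²p/∂t² = a² ∂²p/∂x²` there. -/
def IsWaveSolution (a c d T₀ T₁ : ℝ) (p : ℝ → ℝ → ℝ) : Prop :=
  ∃ U : Set (ℝ × ℝ), IsOpen U ∧ (Set.Icc c d ×ˢ Set.Icc T₀ T₁) ⊆ U ∧
    ContDiffOn ℝ 2 (fun q : ℝ × ℝ => p q.1 q.2) U ∧
    ∀ x ∈ Set.Icc c d, ∀ t ∈ Set.Icc T₀ T₁,
      deriv (deriv (fun s => p x s)) t = a ^ 2 * deriv (deriv (fun y => p y t)) x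

section Calculus

variable {G E : Type*} [NormedAddCommGroup G] [NormedSpace ℝ G] [NormedAddCommGroup E]
  [NormedSpace ℝ E] {f : G → E} {U : Set G} {m n : WithTop ℕ∞} {q : G}

theorem ContDiffOn.hasFDerivAt_of_isOpen (hf : ContDiffOn ℝ n f U) (hU : IsOpen U) (hn : n ≠ 0)
    (hq : q ∈ U) : HasFDerivAt f (fderiv ℝ f q) q :=
  ((hf.contDiffAt (hU.mem_nhds hq)).differentiableAt hn).hasFDerivAt

theorem ContDiffOn.fderiv_apply_of_isOpen (hf : ContDiffOn ℝ n f U) (hU : IsOpen U)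
    (hmn : m + 1 ≤ n) (v : G) : ContDiffOn ℝ m (fun p => fderiv ℝ f p v) U :=
  (hf.fderiv_of_isOpen hU hmn).clm_apply contDiffOn_const

theorem ContDiffAt.fderiv_fderiv_apply_comm (hf : ContDiffAt ℝ 2 f q) (v w : G) :
    fderiv ℝ (fun p => fderiv ℝ f p v) q w = fderiv ℝ (fun p => fderiv ℝ f p w) q v := by
  have hd : DifferentiableAt ℝ (fderiv ℝ f) q :=
    (hf.fderiv_right (m := 1) (by norm_num)).differentiableAt one_ne_zero
  rw [fderiv_clm_apply hd (differentiableAt_const v),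
    fderiv_clm_apply hd (differentiableAt_const w)]
  simpa using hf.isSymmSndFDerivAt (by simp) w v

theorem deriv_deriv_fun_sub {f g : ℝ → ℝ} {x : ℝ} (hf : ContDiffAt ℝ 2 f x)
    (hg : ContDiffAt ℝ 2 g x) :
    deriv (deriv fun y => f y - g y) x = deriv (deriv f) x - deriv (deriv g) x := by
  simpa only [iteratedDeriv_eq_iterate, Function.iterate_succ, Function.iterate_zero,
    Function.comp_id, Function.comp_apply, id_eq] using iteratedDeriv_fun_sub (n := 2) hf hg

theorem HasDerivAt.eq_zero_of_eqOn_zero_Icc {f : ℝ → E} {f' : E} {a b x : ℝ}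
    (hf : HasDerivAt f f' x) (hab : a < b) (hx : x ∈ Icc a b)
    (h0 : EqOn f 0 (Icc a b)) : f' = 0 :=
  (uniqueDiffOn_Icc hab x hx).eq_deriv _ hf.hasDerivWithinAt
    ((hasDerivWithinAt_const x _ 0).congr h0 (h0 hx))

theorem eq_of_hasDerivAt_zero_on_Icc {f : ℝ → E} {a b : ℝ}
    (hf : ∀ x ∈ Icc a b, HasDerivAt f 0 x) : ∀ x ∈ Icc a b, f x = f a :=
  constant_of_has_deriv_right_zero (fun x hx => (hf x hx).continuousAt.continuousWithinAt)
    fun x hx => (hf x (Ico_subset_Icc_self hx)).hasDerivWithinAt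

theorem ContinuousOn.eqOn_zero_of_intervalIntegral_eq_zero {f : ℝ → ℝ} {c d : ℝ} (hcd : c < d)
    (hf : ContinuousOn f (Icc c d)) (hnn : ∀ x ∈ Icc c d, 0 ≤ f x)
    (hint : ∫ x in c..d, f x = 0) : EqOn f 0 (Icc c d) := by
  intro x hx
  by_contra hne
  exact (intervalIntegral.integral_pos hcd hf (fun y hy => hnn y (Ioc_subset_Icc_self hy))
    ⟨x, hx, (hnn x hx).lt_of_ne' hne⟩).ne' hint

theorem hasDerivAt_intervalIntegral_of_continuousOn {φ ψ : ℝ × ℝ → E} {U : Set (ℝ × ℝ)}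
    {c d t : ℝ} (hU : IsOpen U) (hK : [[c, d]] ×ˢ {t} ⊆ U) (hφ : ContinuousOn φ U)
    (hψ : ContinuousOn ψ U)
    (hφψ : ∀ x s, (x, s) ∈ U → HasDerivAt (fun r => φ (x, r)) (ψ (x, s)) s) :
    HasDerivAt (fun s => ∫ x in c..d, φ (x, s)) (∫ x in c..d, ψ (x, t)) t := by
  obtain ⟨X, S, -, hS, hX, htS, hXS⟩ :=
    generalized_tube_lemma isCompact_uIcc isCompact_singleton hU hK
  obtain ⟨ε, hε, hεS⟩ := Metric.nhds_basis_closedBall.mem_iff.1 (hS.mem_nhds (htS rfl))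
  have hR : [[c, d]] ×ˢ Metric.closedBall t ε ⊆ U := (prod_mono hX hεS).trans hXS
  obtain ⟨C, hC⟩ := (isCompact_uIcc.prod (isCompact_closedBall t ε)).exists_bound_of_continuousOn
    (hψ.mono hR)
  have hslice : ∀ {f : ℝ × ℝ → E}, ContinuousOn f U → ∀ s ∈ Metric.closedBall t ε,
      ContinuousOn (fun x => f (x, s)) [[c, d]] := fun hf s hs =>
    hf.comp (by fun_prop : Continuous fun x : ℝ => (x, s)).continuousOn fun x hx => hR ⟨hx, hs⟩
  have ht : t ∈ Metric.closedBall t ε := Metric.mem_closedBall_self hε.le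
  refine (intervalIntegral.hasDerivAt_integral_of_dominated_loc_of_deriv_le
    (F := fun s x => φ (x, s)) (F' := fun s x => ψ (x, s)) (bound := fun _ => C)
    (Metric.closedBall_mem_nhds t hε) ?_ (hslice hφ t ht).intervalIntegrable
    (((hslice hψ t ht).mono uIoc_subset_uIcc).aestronglyMeasurable measurableSet_uIoc) ?_
    intervalIntegrable_const ?_).2
  · filter_upwards [Metric.closedBall_mem_nhds t hε] with s hs
    exact ((hslice hφ s hs).mono uIoc_subset_uIcc).aestronglyMeasurable measurableSet_uIoc
  · exact Eventually.of_forall fun x hx s hs => hC (x, s) ⟨uIoc_subset_uIcc hx, hs⟩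
  · exact Eventually.of_forall fun x hx s hs => hφψ x s (hR ⟨uIoc_subset_uIcc hx, hs⟩)

end Calculus

section Slices

variable {E : Type*} [NormedAddCommGroup E] [NormedSpace ℝ E] {F : ℝ × ℝ → E}
  {U : Set (ℝ × ℝ)} {n : WithTop ℕ∞} {x t : ℝ}

theorem HasFDerivAt.hasDerivAt_fst_slice {F' : ℝ × ℝ →L[ℝ] E} (h : HasFDerivAt F F' (x, t)) :
    HasDerivAt (fun y => F (y, t)) (F' (1, 0)) x :=
  h.comp_hasDerivAt x ((hasDerivAt_id x).prodMk (hasDerivAt_const x t))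

theorem HasFDerivAt.hasDerivAt_snd_slice {F' : ℝ × ℝ →L[ℝ] E} (h : HasFDerivAt F F' (x, t)) :
    HasDerivAt (fun s => F (x, s)) (F' (0, 1)) t :=
  h.comp_hasDerivAt t ((hasDerivAt_const t x).prodMk (hasDerivAt_id t))

theorem ContDiffOn.hasDerivAt_fst_slice (hF : ContDiffOn ℝ n F U) (hU : IsOpen U) (hn : n ≠ 0)
    (hq : (x, t) ∈ U) : HasDerivAt (fun y => F (y, t)) (fderiv ℝ F (x, t) (1, 0)) x :=
  (hF.hasFDerivAt_of_isOpen hU hn hq).hasDerivAt_fst_slice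

theorem ContDiffOn.hasDerivAt_snd_slice (hF : ContDiffOn ℝ n F U) (hU : IsOpen U) (hn : n ≠ 0)
    (hq : (x, t) ∈ U) : HasDerivAt (fun s => F (x, s)) (fderiv ℝ F (x, t) (0, 1)) t :=
  (hF.hasFDerivAt_of_isOpen hU hn hq).hasDerivAt_snd_slice

theorem ContDiffOn.contDiffAt_fst_slice (hF : ContDiffOn ℝ n F U) (hU : IsOpen U)
    (hq : (x, t) ∈ U) : ContDiffAt ℝ n (fun y => F (y, t)) x :=
  (hF.contDiffAt (hU.mem_nhds hq)).comp x (contDiffAt_id.prodMk contDiffAt_const)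

theorem ContDiffOn.contDiffAt_snd_slice (hF : ContDiffOn ℝ n F U) (hU : IsOpen U)
    (hq : (x, t) ∈ U) : ContDiffAt ℝ n (fun s => F (x, s)) t :=
  (hF.contDiffAt (hU.mem_nhds hq)).comp t (contDiffAt_const.prodMk contDiffAt_id)

theorem ContDiffOn.deriv_deriv_fst_slice (hF : ContDiffOn ℝ 2 F U) (hU : IsOpen U)
    (hq : (x, t) ∈ U) :
    deriv (deriv fun y => F (y, t)) x = fderiv ℝ (fun p => fderiv ℝ F p (1, 0)) (x, t) (1, 0) := by
  have hnhds : ∀ᶠ y in 𝓝 x, (y, t) ∈ U :=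
    (by fun_prop : Continuous fun y : ℝ => (y, t)).continuousAt.preimage_mem_nhds (hU.mem_nhds hq)
  have hderiv : deriv (fun y => F (y, t)) =ᶠ[𝓝 x] fun y => fderiv ℝ F (y, t) (1, 0) := by
    filter_upwards [hnhds] with y hy
    exact (hF.hasDerivAt_fst_slice hU two_ne_zero hy).deriv
  rw [hderiv.deriv_eq]
  exact ((hF.fderiv_apply_of_isOpen hU (m := 1) (by norm_num) _).hasDerivAt_fst_slice hU
    one_ne_zero hq).deriv

theorem ContDiffOn.deriv_deriv_snd_slice (hF : ContDiffOn ℝ 2 F U) (hU : IsOpen U)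
    (hq : (x, t) ∈ U) :
    deriv (deriv fun s => F (x, s)) t = fderiv ℝ (fun p => fderiv ℝ F p (0, 1)) (x, t) (0, 1) := by
  have hnhds : ∀ᶠ s in 𝓝 t, (x, s) ∈ U :=
    (by fun_prop : Continuous fun s : ℝ => (x, s)).continuousAt.preimage_mem_nhds (hU.mem_nhds hq)
  have hderiv : deriv (fun s => F (x, s)) =ᶠ[𝓝 t] fun s => fderiv ℝ F (x, s) (0, 1) := by
    filter_upwards [hnhds] with s hs
    exact (hF.hasDerivAt_snd_slice hU two_ne_zero hs).deriv
  rw [hderiv.deriv_eq]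
  exact ((hF.fderiv_apply_of_isOpen hU (m := 1) (by norm_num) _).hasDerivAt_snd_slice hU
    one_ne_zero hq).deriv

end Slices

namespace IsWaveSolution

variable {a c d T₀ T₁ x t : ℝ} {p u v : ℝ → ℝ → ℝ}

theorem differentiableAt_fst_slice (hp : IsWaveSolution a c d T₀ T₁ p) (hx : x ∈ Icc c d)
    (ht : t ∈ Icc T₀ T₁) : DifferentiableAt ℝ (fun y => p y t) x := by
  obtain ⟨U, hU, hKU, hF, -⟩ := hp
  exact (hF.contDiffAt_fst_slice hU (hKU ⟨hx, ht⟩)).differentiableAt two_ne_zero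

theorem differentiableAt_snd_slice (hp : IsWaveSolution a c d T₀ T₁ p) (hx : x ∈ Icc c d)
    (ht : t ∈ Icc T₀ T₁) : DifferentiableAt ℝ (fun s => p x s) t := by
  obtain ⟨U, hU, hKU, hF, -⟩ := hp
  exact (hF.contDiffAt_snd_slice hU (hKU ⟨hx, ht⟩)).differentiableAt two_ne_zero

theorem sub (hu : IsWaveSolution a c d T₀ T₁ u) (hv : IsWaveSolution a c d T₀ T₁ v) :
    IsWaveSolution a c d T₀ T₁ (fun x t => u x t - v x t) := by
  obtain ⟨U, hU, hKU, hFu, hwu⟩ := hu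
  obtain ⟨V, hV, hKV, hFv, hwv⟩ := hv
  refine ⟨U ∩ V, hU.inter hV, subset_inter hKU hKV,
    (hFu.mono inter_subset_left).sub (hFv.mono inter_subset_right), fun x hx t ht => ?_⟩
  have hqU : (x, t) ∈ U := hKU ⟨hx, ht⟩
  have hqV : (x, t) ∈ V := hKV ⟨hx, ht⟩
  rw [deriv_deriv_fun_sub (hFu.contDiffAt_snd_slice hU hqU) (hFv.contDiffAt_snd_slice hV hqV),
    deriv_deriv_fun_sub (hFu.contDiffAt_fst_slice hU hqU) (hFv.contDiffAt_fst_slice hV hqV),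
    hwu x hx t ht, hwv x hx t ht, mul_sub]

end IsWaveSolution

-- Points of `ℝ × ℝ` are `(x, t)`: `(1, 0)` is the space direction and `(0, 1)` the time direction.
noncomputable def waveEnergyDensity (a : ℝ) (F : ℝ × ℝ → ℝ) (q : ℝ × ℝ) : ℝ :=
  fderiv ℝ F q (0, 1) ^ 2 + a ^ 2 * fderiv ℝ F q (1, 0) ^ 2

noncomputable def waveEnergyFlux (a : ℝ) (F : ℝ × ℝ → ℝ) (q : ℝ × ℝ) : ℝ :=
  2 * a ^ 2 * (fderiv ℝ F q (0, 1) * fderiv ℝ F q (1, 0))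

noncomputable def waveEnergy (a c d : ℝ) (F : ℝ × ℝ → ℝ) (t : ℝ) : ℝ :=
  ∫ x in c..d, waveEnergyDensity a F (x, t)

section Energy

variable {a c d t : ℝ} {F : ℝ × ℝ → ℝ} {U : Set (ℝ × ℝ)}

theorem waveEnergyDensity_nonneg (a : ℝ) (F : ℝ × ℝ → ℝ) (q : ℝ × ℝ) :
    0 ≤ waveEnergyDensity a F q := by
  unfold waveEnergyDensity
  positivity

theorem ContDiffOn.contDiffOn_waveEnergyDensity (hF : ContDiffOn ℝ 2 F U) (hU : IsOpen U) :
    ContDiffOn ℝ 1 (waveEnergyDensity a F) U :=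
  ((hF.fderiv_apply_of_isOpen hU (by norm_num) (0, 1)).pow 2).add
    (contDiffOn_const.mul ((hF.fderiv_apply_of_isOpen hU (by norm_num) (1, 0)).pow 2))

theorem ContDiffOn.contDiffOn_waveEnergyFlux (hF : ContDiffOn ℝ 2 F U) (hU : IsOpen U) :
    ContDiffOn ℝ 1 (waveEnergyFlux a F) U :=
  contDiffOn_const.mul ((hF.fderiv_apply_of_isOpen hU (by norm_num) (0, 1)).mul
    (hF.fderiv_apply_of_isOpen hU (by norm_num) (1, 0)))

theorem fderiv_waveEnergyDensity_eq_fderiv_waveEnergyFlux (hF : ContDiffOn ℝ 2 F U)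
    (hU : IsOpen U) {q : ℝ × ℝ} (hq : q ∈ U)
    (hwave : fderiv ℝ (fun p => fderiv ℝ F p (0, 1)) q (0, 1) =
      a ^ 2 * fderiv ℝ (fun p => fderiv ℝ F p (1, 0)) q (1, 0)) :
    fderiv ℝ (waveEnergyDensity a F) q (0, 1) = fderiv ℝ (waveEnergyFlux a F) q (1, 0) := by
  obtain ⟨x, t⟩ := q
  have hFt := hF.fderiv_apply_of_isOpen hU (m := 1) (by norm_num) (0, 1)
  have hFx := hF.fderiv_apply_of_isOpen hU (m := 1) (by norm_num) (1, 0)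
  have hdensity := ((hFt.hasDerivAt_snd_slice hU one_ne_zero hq).fun_pow 2).add
    (((hFx.hasDerivAt_snd_slice hU one_ne_zero hq).fun_pow 2).const_mul (a ^ 2))
  have hflux := ((hFt.hasDerivAt_fst_slice hU one_ne_zero hq).fun_mul
    (hFx.hasDerivAt_fst_slice hU one_ne_zero hq)).const_mul (2 * a ^ 2)
  rw [((hF.contDiffOn_waveEnergyDensity hU).hasDerivAt_snd_slice hU one_ne_zero hq).unique hdensity,
    ((hF.contDiffOn_waveEnergyFlux hU).hasDerivAt_fst_slice hU one_ne_zero hq).unique hflux, hwave,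
    (hF.contDiffAt (hU.mem_nhds hq)).fderiv_fderiv_apply_comm (1, 0) (0, 1)]
  ring

theorem hasDerivAt_waveEnergy (hF : ContDiffOn ℝ 2 F U) (hU : IsOpen U) (hcd : c ≤ d)
    (hK : Icc c d ×ˢ {t} ⊆ U)
    (hwave : ∀ x ∈ Icc c d, fderiv ℝ (fun p => fderiv ℝ F p (0, 1)) (x, t) (0, 1) =
      a ^ 2 * fderiv ℝ (fun p => fderiv ℝ F p (1, 0)) (x, t) (1, 0))
    (hc : fderiv ℝ F (c, t) (0, 1) = 0) (hd : fderiv ℝ F (d, t) (1, 0) = 0) :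
    HasDerivAt (waveEnergy a c d F) 0 t := by
  have hdensity := hF.contDiffOn_waveEnergyDensity hU (a := a)
  have hflux := hF.contDiffOn_waveEnergyFlux hU (a := a)
  rw [← uIcc_of_le hcd] at hK hwave
  have hmem : ∀ x ∈ [[c, d]], (x, t) ∈ U := fun x hx => hK ⟨hx, mem_singleton t⟩
  have hderiv := hasDerivAt_intervalIntegral_of_continuousOn hU hK hdensity.continuousOn
    (hdensity.fderiv_apply_of_isOpen hU (m := 0) (by norm_num) (0, 1)).continuousOn
    fun x s hq => hdensity.hasDerivAt_snd_slice hU one_ne_zero hq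
  have hbalance : ∫ x in c..d, fderiv ℝ (waveEnergyDensity a F) (x, t) (0, 1) =
      waveEnergyFlux a F (d, t) - waveEnergyFlux a F (c, t) := by
    rw [intervalIntegral.integral_congr fun x hx =>
      fderiv_waveEnergyDensity_eq_fderiv_waveEnergyFlux hF hU (hmem x hx) (hwave x hx)]
    exact intervalIntegral.integral_eq_sub_of_hasDerivAt
      (fun x hx => hflux.hasDerivAt_fst_slice hU one_ne_zero (hmem x hx))
      ((hflux.fderiv_apply_of_isOpen hU (m := 0) (by norm_num) (1, 0)).continuousOn.comp
        (by fun_prop) hmem).intervalIntegrable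
  rw [hbalance, waveEnergyFlux, waveEnergyFlux, hc, hd, mul_zero, zero_mul, mul_zero,
    sub_self] at hderiv
  exact hderiv

theorem fderiv_snd_eq_zero_of_waveEnergy_eq_zero (hF : ContDiffOn ℝ 2 F U) (hU : IsOpen U)
    (hcd : c < d) (hK : Icc c d ×ˢ {t} ⊆ U) (hE : waveEnergy a c d F t = 0) {x : ℝ}
    (hx : x ∈ Icc c d) : fderiv ℝ F (x, t) (0, 1) = 0 := by
  have hdensity := ((hF.contDiffOn_waveEnergyDensity hU).continuousOn.comp (by fun_prop)
    fun y hy => hK ⟨hy, mem_singleton t⟩).eqOn_zero_of_intervalIntegral_eq_zero hcd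
    (fun y _ => waveEnergyDensity_nonneg a F _) hE hx
  have := (add_eq_zero_iff_of_nonneg (sq_nonneg _) (by positivity)).1 hdensity
  exact pow_eq_zero_iff two_ne_zero |>.1 this.1

end Energy

theorem IsWaveSolution.eq_zero_of_zero_data {a c d T : ℝ} {w : ℝ → ℝ → ℝ}
    (hw : IsWaveSolution a c d 0 T w) (hcd : c < d) (hT : 0 < T)
    (hinit : ∀ x ∈ Icc c d, w x 0 = 0) (hinit' : ∀ x ∈ Icc c d, deriv (fun s => w x s) 0 = 0)
    (hDir : ∀ t ∈ Icc 0 T, w c t = 0) (hNeu : ∀ t ∈ Icc 0 T, deriv (fun y => w y t) d = 0) :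
    ∀ x ∈ Icc c d, ∀ t ∈ Icc 0 T, w x t = 0 := by
  obtain ⟨U, hU, hKU, hF, hwave⟩ := hw
  set F : ℝ × ℝ → ℝ := fun q => w q.1 q.2
  have hc : c ∈ Icc c d := left_mem_Icc.2 hcd.le
  have hd : d ∈ Icc c d := right_mem_Icc.2 hcd.le
  have h0 : (0 : ℝ) ∈ Icc 0 T := left_mem_Icc.2 hT.le
  have hK : ∀ t ∈ Icc 0 T, Icc c d ×ˢ {t} ⊆ U := fun t ht q hq =>
    hKU ⟨hq.1, (mem_singleton_iff.1 hq.2) ▸ ht⟩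
  have hslice_x : ∀ x ∈ Icc c d, ∀ t ∈ Icc 0 T,
      HasDerivAt (fun y => w y t) (fderiv ℝ F (x, t) (1, 0)) x := fun x hx t ht =>
    hF.hasDerivAt_fst_slice hU two_ne_zero (hKU ⟨hx, ht⟩)
  have hslice_t : ∀ x ∈ Icc c d, ∀ t ∈ Icc 0 T,
      HasDerivAt (fun s => w x s) (fderiv ℝ F (x, t) (0, 1)) t := fun x hx t ht =>
    hF.hasDerivAt_snd_slice hU two_ne_zero (hKU ⟨hx, ht⟩)
  have hE' : ∀ t ∈ Icc 0 T, HasDerivAt (waveEnergy a c d F) 0 t := fun t ht =>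
    hasDerivAt_waveEnergy hF hU hcd.le (hK t ht)
      (fun x hx => by
        rw [← hF.deriv_deriv_snd_slice hU (hKU ⟨hx, ht⟩),
          ← hF.deriv_deriv_fst_slice hU (hKU ⟨hx, ht⟩)]
        exact hwave x hx t ht)
      ((hslice_t c hc t ht).eq_zero_of_eqOn_zero_Icc hT ht hDir)
      ((hslice_x d hd t ht).deriv.symm.trans (hNeu t ht))
  have hE0 : waveEnergy a c d F 0 = 0 := by
    have hdensity : EqOn (fun x => waveEnergyDensity a F (x, 0)) 0 [[c, d]] := by
      intro x hx
      rw [uIcc_of_le hcd.le] at hx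
      simp only [waveEnergyDensity, ← (hslice_t x hx 0 h0).deriv, hinit' x hx,
        (hslice_x x hx 0 h0).eq_zero_of_eqOn_zero_Icc hcd hx hinit]
      simp
    simp [waveEnergy, intervalIntegral.integral_congr hdensity]
  have hFt : ∀ x ∈ Icc c d, ∀ t ∈ Icc 0 T, fderiv ℝ F (x, t) (0, 1) = 0 := fun x hx t ht =>
    fderiv_snd_eq_zero_of_waveEnergy_eq_zero hF hU hcd (hK t ht)
      ((eq_of_hasDerivAt_zero_on_Icc hE' t ht).trans hE0) hx
  intro x hx t ht
  rw [eq_of_hasDerivAt_zero_on_Icc (f := fun s => w x s)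
    (fun s hs => hFt x hx s hs ▸ hslice_t x hx s hs) t ht, hinit x hx]

theorem wave_dirichlet_neumann_uniqueness_general
    (a c d T : ℝ) (hcd : c < d) (hT : 0 < T)
    (u v : ℝ → ℝ → ℝ)
    (hu : IsWaveSolution a c d 0 T u)
    (hv : IsWaveSolution a c d 0 T v)
    (hinit : ∀ x ∈ Set.Icc c d, u x 0 = v x 0)
    (hinit' : ∀ x ∈ Set.Icc c d,
      deriv (fun s => u x s) 0 = deriv (fun s => v x s) 0)
    (hDir : ∀ t ∈ Set.Icc (0 : ℝ) T, u c t = v c t)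
    (hNeu : ∀ t ∈ Set.Icc (0 : ℝ) T,
      deriv (fun y => u y t) d = deriv (fun y => v y t) d) :
    ∀ x ∈ Set.Icc c d, ∀ t ∈ Set.Icc (0 : ℝ) T, u x t = v x t := by
  have h0 : (0 : ℝ) ∈ Icc 0 T := left_mem_Icc.2 hT.le
  have hd : d ∈ Icc c d := right_mem_Icc.2 hcd.le
  have hdiff := (hu.sub hv).eq_zero_of_zero_data hcd hT
    (fun x hx => sub_eq_zero.2 (hinit x hx))
    (fun x hx => by
      rw [deriv_fun_sub (hu.differentiableAt_snd_slice hx h0)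
        (hv.differentiableAt_snd_slice hx h0), hinit' x hx, sub_self])
    (fun t ht => sub_eq_zero.2 (hDir t ht))
    (fun t ht => by
      rw [deriv_fun_sub (hu.differentiableAt_fst_slice hd ht)
        (hv.differentiableAt_fst_slice hd ht), hNeu t ht, sub_self])
  exact fun x hx t ht => sub_eq_zero.1 (hdiff x hx t ht)

/-- Uniqueness for the mixed Dirichlet–Neumann initial–boundary value problem
for the 1-D wave equation. -/
theorem wave_dirichlet_neumann_uniqueness
    (a c d T : ℝ) (ha : 0 < a) (hcd : c < d) (hT : 0 < T)
    (u v : ℝ → ℝ → ℝ)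
    (hu : IsWaveSolution a c d 0 T u)
    (hv : IsWaveSolution a c d 0 T v)
    (hinit : ∀ x ∈ Set.Icc c d, u x 0 = v x 0)
    (hinit' : ∀ x ∈ Set.Icc c d,
      deriv (fun s => u x s) 0 = deriv (fun s => v x s) 0)
    (hDir : ∀ t ∈ Set.Icc (0 : ℝ) T, u c t = v c t)
    (hNeu : ∀ t ∈ Set.Icc (0 : ℝ) T,
      deriv (fun y => u y t) d = deriv (fun y => v y t) d) :
    ∀ x ∈ Set.Icc c d, ∀ t ∈ Set.Icc (0 : ℝ) T, u x t = v x t :=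
  wave_dirichlet_neumann_uniqueness_general a c d T hcd hT u v hu hv hinit hinit' hDir hNeu
end

section
/- (Decomposition Theorem, N = 2.) Let a > 0, T > 0, and X_A = X_{1A} < X_{2A} < X_{1B} < X_{2B} = X_B, so that Ω₁ = [X_{1A}, X_{1B}] and Ω₂ = [X_{2A}, X_{2B}] overlap in [X_{2A}, X_{1B}] ≠ ∅. Let u be a classical solution of the 1-D wave equation with speed a on [X_A, X_B] × [0, T]. Suppose p₁ and p₂ are classical solutions of the 1-D wave equation with speed a on Ω₁ × [0, T] and Ω₂ × [0, T] respectively, satisfying: (i) pᵢ(x,0) = u(x,0) and ∂pᵢ/∂t(x,0) = ∂u/∂t(x,0) for all x in Ωᵢ (i = 1,2); (ii) the outer Dirichlet conditions p₁(X_{1A},t) = u(X_{1A},t) and p₂(X_{2B},t) = u(X_{2B},t) for all t ∈ [0, T]; and (iii) the Neumann transmission (flux matching) conditions ∂p₁/∂x(X_{1B},t) = ∂p₂/∂x(X_{1B},t) and ∂p₂/∂x(X_{2A},t) = ∂p₁/∂x(X_{2A},t) for all t ∈ [0, T]. Then p₁(x,t) = u(x,t) for all (x,t) ∈ Ω₁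 × [0, T] and p₂(x,t) = u(x,t) for all (x,t) ∈ Ω₂ × [0, T]. -/
/-!
The differences `p₁ - u`, `p₂ - u` and `p₁ - p₂` solve the wave equation, and the Riemann
invariants `∂ₜw ∓ a ∂ₓw` of a solution `w` are constant along the characteristics
`x ∓ a t = const`, so each of them is determined by its initial value or by its value where the
characteristic enters through the boundary. On the overlap, `p₁ - p₂` has zero initial data and
zero flux at both ends, and a Neumann end reflects each invariant into the other one; stepping
forward in time by `(X1B - X2A) / a` shows that both invariants vanish, so `p₁` and `p₂` have the
same gradient on the overlap. Then the invariants of `p₁ - u` and `p₂ - u` pass unchanged through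
the interfaces, a Dirichlet end reflects each invariant into minus the other one, and stepping
forward by `(X_B - X_A) / a` shows that all of them vanish. Hence `∂ₜ(pᵢ - u) = 0`, and the
initial condition gives `pᵢ = u`.
-/

open Set Topology Function

theorem HasFDerivAt.hasDerivAt_comp_prodMk_left {F : Type*} [NormedAddCommGroup F]
    [NormedSpace ℝ F] {g : ℝ × ℝ → F} {g' : ℝ × ℝ →L[ℝ] F} {x t : ℝ}
    (h : HasFDerivAt g g' (x, t)) : HasDerivAt (fun y => g (y, t)) (g' (1, 0)) x :=
  h.comp_hasDerivAt x ((hasDerivAt_id x).prodMk (hasDerivAt_const x t))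

theorem HasFDerivAt.hasDerivAt_comp_prodMk_right {F : Type*} [NormedAddCommGroup F]
    [NormedSpace ℝ F] {g : ℝ × ℝ → F} {g' : ℝ × ℝ →L[ℝ] F} {x t : ℝ}
    (h : HasFDerivAt g g' (x, t)) : HasDerivAt (fun s => g (x, s)) (g' (0, 1)) t :=
  h.comp_hasDerivAt t ((hasDerivAt_const t x).prodMk (hasDerivAt_id t))

theorem eq_of_hasDerivAt_zero {g : ℝ → ℝ} {b c : ℝ} (hbc : b ≤ c)
    (h : ∀ s ∈ Icc b c, HasDerivAt g 0 s) : g c = g b :=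
  constant_of_has_deriv_right_zero (fun s hs => (h s hs).continuousAt.continuousWithinAt)
    (fun s hs => (h s (Ico_subset_Icc_self hs)).hasDerivWithinAt) c ⟨hbc, le_rfl⟩

theorem deriv_eq_of_eqOn_Icc {g h : ℝ → ℝ} {c d x : ℝ} (hcd : c < d) (hx : x ∈ Icc c d)
    (hg : DifferentiableAt ℝ g x) (hh : DifferentiableAt ℝ h x) (heq : EqOn g h (Icc c d)) :
    deriv g x = deriv h x := by
  have hu : UniqueDiffWithinAt ℝ (Icc c d) x := uniqueDiffOn_Icc hcd x hx
  rw [← hg.derivWithin hu, ← hh.derivWithin hu, derivWithin_congr heq (heq hx)]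

theorem forall_of_forall_le_add {δ : ℝ} (hδ : 0 < δ) {P : ℝ → Prop} (h₀ : ∀ s ≤ 0, P s)
    (hstep : ∀ t, (∀ s ≤ t, P s) → ∀ s ≤ t + δ, P s) (s : ℝ) : P s := by
  have hn : ∀ n : ℕ, ∀ s ≤ n * δ, P s := by
    intro n
    induction n with
    | zero => simpa using h₀
    | succ n ih => simpa [add_mul] using hstep _ ih
  obtain ⟨n, hsn⟩ := exists_nat_ge (s / δ)
  exact hn n s ((div_le_iff₀ hδ).mp hsn)

theorem ContinuousLinearMap.apply_pair_eq {F : Type*} [NormedAddCommGroup F] [NormedSpace ℝ F]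
    (L : ℝ × ℝ →L[ℝ] F) (u v : ℝ) : L (u, v) = u • L (1, 0) + v • L (0, 1) := by
  have huv : ((u, v) : ℝ × ℝ) = u • (1, 0) + v • (0, 1) := by simp
  rw [huv, map_add, map_smul, map_smul]

section PartialDerivatives

variable {f : ℝ × ℝ → ℝ} {x t : ℝ}

theorem DifferentiableAt.fderiv_apply_one_zero (h : DifferentiableAt ℝ f (x, t)) :
    fderiv ℝ f (x, t) (1, 0) = deriv (fun y => f (y, t)) x :=
  h.hasFDerivAt.hasDerivAt_comp_prodMk_left.deriv.symm

theorem DifferentiableAt.fderiv_apply_zero_one (h : DifferentiableAt ℝ f (x, t)) :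
    fderiv ℝ f (x, t) (0, 1) = deriv (fun s => f (x, s)) t :=
  h.hasFDerivAt.hasDerivAt_comp_prodMk_right.deriv.symm

theorem ContDiffAt.deriv_deriv_comp_prodMk_left (hf : ContDiffAt ℝ 2 f (x, t)) :
    deriv (deriv fun y => f (y, t)) x = fderiv ℝ (fderiv ℝ f) (x, t) (1, 0) (1, 0) := by
  have hev : ∀ᶠ y in 𝓝 x, ContDiffAt ℝ 2 f (y, t) :=
    (continuous_id.prodMk continuous_const).continuousAt.eventually (hf.eventually (by simp))
  have hderiv : deriv (fun y => f (y, t)) =ᶠ[𝓝 x] fun y => fderiv ℝ f (y, t) (1, 0) :=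
    hev.mono fun y hy => ((hy.differentiableAt two_ne_zero).fderiv_apply_one_zero).symm
  rw [hderiv.deriv_eq]
  have hD := ((hf.fderiv_right (m := 1) le_rfl).differentiableAt one_ne_zero).hasFDerivAt
  simpa using
    (hD.hasDerivAt_comp_prodMk_left.clm_apply (hasDerivAt_const x ((1, 0) : ℝ × ℝ))).deriv

theorem ContDiffAt.deriv_deriv_comp_prodMk_right (hf : ContDiffAt ℝ 2 f (x, t)) :
    deriv (deriv fun s => f (x, s)) t = fderiv ℝ (fderiv ℝ f) (x, t) (0, 1) (0, 1) := by
  have hev : ∀ᶠ s in 𝓝 t, ContDiffAt ℝ 2 f (x, s) :=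
    (continuous_const.prodMk continuous_id).continuousAt.eventually (hf.eventually (by simp))
  have hderiv : deriv (fun s => f (x, s)) =ᶠ[𝓝 t] fun s => fderiv ℝ f (x, s) (0, 1) :=
    hev.mono fun s hs => ((hs.differentiableAt two_ne_zero).fderiv_apply_zero_one).symm
  rw [hderiv.deriv_eq]
  have hD := ((hf.fderiv_right (m := 1) le_rfl).differentiableAt one_ne_zero).hasFDerivAt
  simpa using
    (hD.hasDerivAt_comp_prodMk_right.clm_apply (hasDerivAt_const t ((0, 1) : ℝ × ℝ))).deriv

end PartialDerivatives

def IsWaveAt (a : ℝ) (f : ℝ × ℝ → ℝ) (q : ℝ × ℝ) : Prop :=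
  ContDiffAt ℝ 2 f q ∧
    fderiv ℝ (fderiv ℝ f) q (0, 1) (0, 1) = a ^ 2 * fderiv ℝ (fderiv ℝ f) q (1, 0) (1, 0)

/- The Riemann invariants `∂ₜf ∓ a ∂ₓf`: for a solution of the wave equation they are constant
along the characteristics `x ∓ a t = const`. -/

noncomputable def rightMoving (a : ℝ) (f : ℝ × ℝ → ℝ) (q : ℝ × ℝ) : ℝ := fderiv ℝ f q (-a, 1)

noncomputable def leftMoving (a : ℝ) (f : ℝ × ℝ → ℝ) (q : ℝ × ℝ) : ℝ := fderiv ℝ f q (a, 1)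

section Invariants

variable {a : ℝ} {f : ℝ × ℝ → ℝ} {q : ℝ × ℝ}

theorem rightMoving_eq : rightMoving a f q = fderiv ℝ f q (0, 1) - a * fderiv ℝ f q (1, 0) := by
  rw [rightMoving, ContinuousLinearMap.apply_pair_eq, smul_eq_mul, smul_eq_mul]; ring

theorem leftMoving_eq : leftMoving a f q = fderiv ℝ f q (0, 1) + a * fderiv ℝ f q (1, 0) := by
  rw [leftMoving, ContinuousLinearMap.apply_pair_eq, smul_eq_mul, smul_eq_mul]; ring

theorem rightMoving_eq_leftMoving_of_fderiv_apply_one_zero (h : fderiv ℝ f q (1, 0) = 0) :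
    rightMoving a f q = leftMoving a f q := by
  rw [rightMoving_eq, leftMoving_eq, h]
  ring

theorem leftMoving_eq_zero_iff_of_fderiv_apply_zero_one (h : fderiv ℝ f q (0, 1) = 0) :
    leftMoving a f q = 0 ↔ rightMoving a f q = 0 := by
  rw [rightMoving_eq, leftMoving_eq, h, zero_add, zero_sub, neg_eq_zero]

theorem fderiv_eq_zero_of_rightMoving_of_leftMoving (ha : a ≠ 0) (hr : rightMoving a f q = 0)
    (hl : leftMoving a f q = 0) : fderiv ℝ f q = 0 := by
  rw [rightMoving_eq] at hr
  rw [leftMoving_eq] at hl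
  have hx : fderiv ℝ f q (1, 0) = 0 :=
    (mul_eq_zero.mp (by linarith : a * fderiv ℝ f q (1, 0) = 0)).resolve_left ha
  ext
  · simpa using hx
  · simpa using (by linarith : fderiv ℝ f q (0, 1) = 0)

end Invariants

section WaveAt

variable {a : ℝ} {f g : ℝ × ℝ → ℝ} {q : ℝ × ℝ}

theorem IsWaveAt.sub (hf : IsWaveAt a f q) (hg : IsWaveAt a g q) : IsWaveAt a (f - g) q := by
  refine ⟨hf.1.sub hg.1, ?_⟩
  have hev : fderiv ℝ (f - g) =ᶠ[𝓝 q] fderiv ℝ f - fderiv ℝ g := by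
    filter_upwards [hf.1.eventually (by simp), hg.1.eventually (by simp)] with y hfy hgy
    exact fderiv_sub (hfy.differentiableAt (by simp)) (hgy.differentiableAt (by simp))
  rw [hev.fderiv_eq, fderiv_sub ((hf.1.fderiv_right le_rfl).differentiableAt one_ne_zero)
    ((hg.1.fderiv_right le_rfl).differentiableAt one_ne_zero)]
  simp only [sub_apply, hf.2, hg.2]
  ring

theorem IsWaveAt.fderiv_fderiv_apply_characteristic (hf : IsWaveAt a f q) {σ : ℝ}
    (hσ : σ ^ 2 = a ^ 2) : fderiv ℝ (fderiv ℝ f) q (σ, 1) (-σ, 1) = 0 := by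
  -- `∂ₜ² - a² ∂ₓ² = (∂ₜ + σ ∂ₓ)(∂ₜ - σ ∂ₓ)` once the mixed partials agree.
  have hsymm := (hf.1.isSymmSndFDerivAt (by simp)) (1, 0) (0, 1)
  rw [ContinuousLinearMap.apply_pair_eq (fderiv ℝ (fderiv ℝ f) q) σ 1,
    ContinuousLinearMap.apply_pair_eq _ (-σ) 1]
  simp only [add_apply, smul_apply, smul_eq_mul]
  linear_combination hf.2 - fderiv ℝ (fderiv ℝ f) q (1, 0) (1, 0) * hσ + σ * hsymm

end WaveAt

section Characteristics

variable {a : ℝ} {f : ℝ × ℝ → ℝ}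

theorem fderiv_apply_eq_along_characteristic {R : Set (ℝ × ℝ)} (hR : Convex ℝ R)
    (hf : ∀ q ∈ R, IsWaveAt a f q) {σ : ℝ} (hσ : σ ^ 2 = a ^ 2) {q₀ q₁ : ℝ × ℝ} (hq₀ : q₀ ∈ R)
    (hq₁ : q₁ ∈ R) {τ : ℝ} (hq : q₁ - q₀ = τ • (σ, 1)) :
    fderiv ℝ f q₁ (-σ, 1) = fderiv ℝ f q₀ (-σ, 1) := by
  let ℓ : ℝ → ℝ × ℝ := fun θ => q₀ + θ • (q₁ - q₀)
  have hderiv : ∀ θ ∈ Icc (0 : ℝ) 1, HasDerivAt (fun θ => fderiv ℝ f (ℓ θ) (-σ, 1)) 0 θ := by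
    intro θ hθ
    have hwave := hf _ (hR.add_smul_sub_mem hq₀ hq₁ hθ)
    have hℓ : HasDerivAt ℓ (q₁ - q₀) θ := by
      simpa only [one_smul] using ((hasDerivAt_id' θ).smul_const (q₁ - q₀)).const_add q₀
    have hD : HasFDerivAt (fderiv ℝ f) (fderiv ℝ (fderiv ℝ f) (ℓ θ)) (ℓ θ) :=
      ((hwave.1.fderiv_right (m := 1) le_rfl).differentiableAt one_ne_zero).hasFDerivAt
    have h := (hD.comp_hasDerivAt θ hℓ).clm_apply (hasDerivAt_const θ ((-σ, 1) : ℝ × ℝ))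
    rwa [hq, map_smul, smul_apply, hwave.fderiv_fderiv_apply_characteristic hσ,
      map_zero, smul_zero, add_zero] at h
  simpa [ℓ] using eq_of_hasDerivAt_zero zero_le_one hderiv

variable {c d T t₁ x t : ℝ}

theorem rightMoving_eq_zero_of_initial_of_left (ha : 0 < a)
    (hf : ∀ q ∈ Icc c d ×ˢ Icc 0 T, IsWaveAt a f q)
    (h₀ : ∀ y ∈ Icc c d, fderiv ℝ f (y, 0) = 0)
    (hc : ∀ s ∈ Icc 0 T, s ≤ t₁ → rightMoving a f (c, s) = 0)
    (hx : x ∈ Icc c d) (ht : t ∈ Icc 0 T) (htt : t ≤ t₁ + (x - c) / a) :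
    rightMoving a f (x, t) = 0 := by
  have hR : Convex ℝ (Icc c d ×ˢ Icc 0 T) := (convex_Icc c d).prod (convex_Icc 0 T)
  have hxt : (x, t) ∈ Icc c d ×ˢ Icc 0 T := ⟨hx, ht⟩
  rcases le_or_gt (a * t) (x - c) with h | h
  · have hfoot : (x - a * t, (0 : ℝ)) ∈ Icc c d ×ˢ Icc 0 T :=
      ⟨⟨by linarith, by nlinarith [ht.1, hx.2]⟩, le_rfl, ht.1.trans ht.2⟩
    rw [rightMoving, fderiv_apply_eq_along_characteristic hR hf rfl hfoot hxt (τ := t)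
      (Prod.ext (by simp [mul_comm]) (by simp))]
    simp [h₀ _ hfoot.1]
  · have hτ : (x - c) / a < t := (div_lt_iff₀ ha).mpr (by linarith)
    have hfoot : (c, t - (x - c) / a) ∈ Icc c d ×ˢ Icc 0 T :=
      ⟨⟨le_rfl, hx.1.trans hx.2⟩, by linarith,
        by linarith [ht.2, div_nonneg (sub_nonneg.2 hx.1) ha.le]⟩
    rw [rightMoving, fderiv_apply_eq_along_characteristic hR hf rfl hfoot hxt (τ := (x - c) / a)
      (Prod.ext (by simp [div_mul_cancel₀ _ ha.ne']) (by simp))]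
    exact hc _ hfoot.2 (by linarith)

theorem leftMoving_eq_zero_of_initial_of_right (ha : 0 < a)
    (hf : ∀ q ∈ Icc c d ×ˢ Icc 0 T, IsWaveAt a f q)
    (h₀ : ∀ y ∈ Icc c d, fderiv ℝ f (y, 0) = 0)
    (hd : ∀ s ∈ Icc 0 T, s ≤ t₁ → leftMoving a f (d, s) = 0)
    (hx : x ∈ Icc c d) (ht : t ∈ Icc 0 T) (htt : t ≤ t₁ + (d - x) / a) :
    leftMoving a f (x, t) = 0 := by
  have hR : Convex ℝ (Icc c d ×ˢ Icc 0 T) := (convex_Icc c d).prod (convex_Icc 0 T)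
  have hxt : (x, t) ∈ Icc c d ×ˢ Icc 0 T := ⟨hx, ht⟩
  rcases le_or_gt (a * t) (d - x) with h | h
  · have hfoot : (x + a * t, (0 : ℝ)) ∈ Icc c d ×ˢ Icc 0 T :=
      ⟨⟨by nlinarith [ht.1, hx.1], by linarith⟩, le_rfl, ht.1.trans ht.2⟩
    have h' := fderiv_apply_eq_along_characteristic hR hf (neg_sq a) hfoot hxt (τ := t)
      (Prod.ext (by simp [mul_comm]) (by simp))
    rw [neg_neg] at h'
    rw [leftMoving, h']
    simp [h₀ _ hfoot.1]
  · have hτ : (d - x) / a < t := (div_lt_iff₀ ha).mpr (by linarith)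
    have hfoot : (d, t - (d - x) / a) ∈ Icc c d ×ˢ Icc 0 T :=
      ⟨⟨hx.1.trans hx.2, le_rfl⟩, by linarith,
        by linarith [ht.2, div_nonneg (sub_nonneg.2 hx.2) ha.le]⟩
    have h' := fderiv_apply_eq_along_characteristic hR hf (neg_sq a) hfoot hxt (τ := (d - x) / a)
      (Prod.ext (by simp [div_mul_cancel₀ _ ha.ne']) (by simp))
    rw [neg_neg] at h'
    rw [leftMoving, h']
    exact hd _ hfoot.2 (by linarith)

end Characteristics

section Systems

variable {a T t₁ x t : ℝ}

theorem leftMoving_eq_zero_of_transmission {f₁ f₂ : ℝ × ℝ → ℝ} {c₁ d₁ c₂ d₂ : ℝ} (ha : 0 < a)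
    (hf₁ : ∀ q ∈ Icc c₁ d₁ ×ˢ Icc 0 T, IsWaveAt a f₁ q)
    (hf₂ : ∀ q ∈ Icc c₂ d₂ ×ˢ Icc 0 T, IsWaveAt a f₂ q) (hd₁ : d₁ ∈ Icc c₂ d₂)
    (h₀₁ : ∀ y ∈ Icc c₁ d₁, fderiv ℝ f₁ (y, 0) = 0) (h₀₂ : ∀ y ∈ Icc c₂ d₂, fderiv ℝ f₂ (y, 0) = 0)
    (htr : ∀ s ∈ Icc 0 T, fderiv ℝ f₁ (d₁, s) = fderiv ℝ f₂ (d₁, s))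
    (hd₂ : ∀ s ∈ Icc 0 T, s ≤ t₁ → leftMoving a f₂ (d₂, s) = 0)
    (hx : x ∈ Icc c₁ d₁) (ht : t ∈ Icc 0 T) (htt : t ≤ t₁ + (d₂ - x) / a) :
    leftMoving a f₁ (x, t) = 0 := by
  refine leftMoving_eq_zero_of_initial_of_right ha hf₁ h₀₁ (t₁ := t₁ + (d₂ - d₁) / a)
    (fun s hs hst => ?_) hx ht (htt.trans_eq (by ring))
  rw [leftMoving, htr s hs, ← leftMoving]
  exact leftMoving_eq_zero_of_initial_of_right ha hf₂ h₀₂ hd₂ hd₁ hs hst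

theorem rightMoving_eq_zero_of_transmission {f₁ f₂ : ℝ × ℝ → ℝ} {c₁ d₁ c₂ d₂ : ℝ} (ha : 0 < a)
    (hf₁ : ∀ q ∈ Icc c₁ d₁ ×ˢ Icc 0 T, IsWaveAt a f₁ q)
    (hf₂ : ∀ q ∈ Icc c₂ d₂ ×ˢ Icc 0 T, IsWaveAt a f₂ q) (hc₂ : c₂ ∈ Icc c₁ d₁)
    (h₀₁ : ∀ y ∈ Icc c₁ d₁, fderiv ℝ f₁ (y, 0) = 0) (h₀₂ : ∀ y ∈ Icc c₂ d₂, fderiv ℝ f₂ (y, 0) = 0)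
    (htr : ∀ s ∈ Icc 0 T, fderiv ℝ f₂ (c₂, s) = fderiv ℝ f₁ (c₂, s))
    (hc₁ : ∀ s ∈ Icc 0 T, s ≤ t₁ → rightMoving a f₁ (c₁, s) = 0)
    (hx : x ∈ Icc c₂ d₂) (ht : t ∈ Icc 0 T) (htt : t ≤ t₁ + (x - c₁) / a) :
    rightMoving a f₂ (x, t) = 0 := by
  refine rightMoving_eq_zero_of_initial_of_left ha hf₂ h₀₂ (t₁ := t₁ + (c₂ - c₁) / a)
    (fun s hs hst => ?_) hx ht (htt.trans_eq (by ring))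
  rw [rightMoving, htr s hs, ← rightMoving]
  exact rightMoving_eq_zero_of_initial_of_left ha hf₁ h₀₁ hc₁ hc₂ hs hst

theorem fderiv_eq_zero_of_neumann {f : ℝ × ℝ → ℝ} {c d : ℝ} (ha : 0 < a) (hcd : c < d)
    (hf : ∀ q ∈ Icc c d ×ˢ Icc 0 T, IsWaveAt a f q) (h₀ : ∀ x ∈ Icc c d, fderiv ℝ f (x, 0) = 0)
    (hc : ∀ s ∈ Icc 0 T, fderiv ℝ f (c, s) (1, 0) = 0)
    (hd : ∀ s ∈ Icc 0 T, fderiv ℝ f (d, s) (1, 0) = 0) :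
    ∀ x ∈ Icc c d, ∀ t ∈ Icc 0 T, fderiv ℝ f (x, t) = 0 := by
  have hc' : c ∈ Icc c d := ⟨le_rfl, hcd.le⟩
  have hd' : d ∈ Icc c d := ⟨hcd.le, le_rfl⟩
  have hbdry : ∀ s, s ∈ Icc 0 T → rightMoving a f (c, s) = 0 ∧ leftMoving a f (d, s) = 0 := by
    refine forall_of_forall_le_add (div_pos (sub_pos.2 hcd) ha)
      (fun s hs0 hs => ?_) (fun t₁ ih s hs hsT => ⟨?_, ?_⟩)
    · obtain rfl : s = 0 := le_antisymm hs0 hs.1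
      simp [rightMoving, leftMoving, h₀ c hc', h₀ d hd']
    · rw [rightMoving_eq_leftMoving_of_fderiv_apply_one_zero (hc s hsT)]
      exact leftMoving_eq_zero_of_initial_of_right ha hf h₀ (fun s' hs' h => (ih s' h hs').2)
        hc' hsT hs
    · rw [← rightMoving_eq_leftMoving_of_fderiv_apply_one_zero (hd s hsT)]
      exact rightMoving_eq_zero_of_initial_of_left ha hf h₀ (fun s' hs' h => (ih s' h hs').1)
        hd' hsT hs
  intro x hx t ht
  exact fderiv_eq_zero_of_rightMoving_of_leftMoving ha.ne'
    (rightMoving_eq_zero_of_initial_of_left ha hf h₀ (fun s hs _ => (hbdry s hs).1) hx ht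
      (t₁ := T) (by linarith [ht.2, div_nonneg (sub_nonneg.2 hx.1) ha.le]))
    (leftMoving_eq_zero_of_initial_of_right ha hf h₀ (fun s hs _ => (hbdry s hs).2) hx ht
      (t₁ := T) (by linarith [ht.2, div_nonneg (sub_nonneg.2 hx.2) ha.le]))

theorem fderiv_eq_zero_of_dirichlet_of_transmission {f₁ f₂ : ℝ × ℝ → ℝ} {c₁ d₁ c₂ d₂ : ℝ}
    (ha : 0 < a) (h₁ : c₁ ≤ c₂) (h₂ : c₂ ≤ d₁) (h₃ : d₁ ≤ d₂) (h₁₂ : c₁ < d₂)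
    (hf₁ : ∀ q ∈ Icc c₁ d₁ ×ˢ Icc 0 T, IsWaveAt a f₁ q)
    (hf₂ : ∀ q ∈ Icc c₂ d₂ ×ˢ Icc 0 T, IsWaveAt a f₂ q)
    (h₀₁ : ∀ x ∈ Icc c₁ d₁, fderiv ℝ f₁ (x, 0) = 0) (h₀₂ : ∀ x ∈ Icc c₂ d₂, fderiv ℝ f₂ (x, 0) = 0)
    (hc₁ : ∀ s ∈ Icc 0 T, fderiv ℝ f₁ (c₁, s) (0, 1) = 0)
    (hd₂ : ∀ s ∈ Icc 0 T, fderiv ℝ f₂ (d₂, s) (0, 1) = 0)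
    (hd₁ : ∀ s ∈ Icc 0 T, fderiv ℝ f₁ (d₁, s) = fderiv ℝ f₂ (d₁, s))
    (hc₂ : ∀ s ∈ Icc 0 T, fderiv ℝ f₂ (c₂, s) = fderiv ℝ f₁ (c₂, s)) :
    (∀ x ∈ Icc c₁ d₁, ∀ t ∈ Icc 0 T, fderiv ℝ f₁ (x, t) = 0) ∧
      (∀ x ∈ Icc c₂ d₂, ∀ t ∈ Icc 0 T, fderiv ℝ f₂ (x, t) = 0) := by
  have hc₁' : c₁ ∈ Icc c₁ d₁ := ⟨le_rfl, h₁.trans h₂⟩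
  have hd₂' : d₂ ∈ Icc c₂ d₂ := ⟨h₂.trans h₃, le_rfl⟩
  -- A wave leaving through one outer end returns through the other one after time `(d₂ - c₁) / a`.
  have hbdry : ∀ s, s ∈ Icc 0 T → leftMoving a f₁ (c₁, s) = 0 ∧ rightMoving a f₂ (d₂, s) = 0 := by
    refine forall_of_forall_le_add (div_pos (sub_pos.2 h₁₂) ha)
      (fun s hs0 hs => ?_) (fun t₁ ih s hs hsT => ⟨?_, ?_⟩)
    · obtain rfl : s = 0 := le_antisymm hs0 hs.1
      simp [rightMoving, leftMoving, h₀₁ c₁ hc₁', h₀₂ d₂ hd₂']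
    · refine leftMoving_eq_zero_of_transmission ha hf₁ hf₂ ⟨h₂, h₃⟩ h₀₁ h₀₂ hd₁
        (fun s' hs' h => ?_) hc₁' hsT hs
      exact (leftMoving_eq_zero_iff_of_fderiv_apply_zero_one (hd₂ s' hs')).2 (ih s' h hs').2
    · refine rightMoving_eq_zero_of_transmission ha hf₁ hf₂ ⟨h₁, h₂⟩ h₀₁ h₀₂ hc₂
        (fun s' hs' h => ?_) hd₂' hsT hs
      exact (leftMoving_eq_zero_iff_of_fderiv_apply_zero_one (hc₁ s' hs')).1 (ih s' h hs').1
  have hr₁ : ∀ s ∈ Icc 0 T, s ≤ T → rightMoving a f₁ (c₁, s) = 0 := fun s hs _ =>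
    (leftMoving_eq_zero_iff_of_fderiv_apply_zero_one (hc₁ s hs)).1 (hbdry s hs).1
  have hl₂ : ∀ s ∈ Icc 0 T, s ≤ T → leftMoving a f₂ (d₂, s) = 0 := fun s hs _ =>
    (leftMoving_eq_zero_iff_of_fderiv_apply_zero_one (hd₂ s hs)).2 (hbdry s hs).2
  refine ⟨fun x hx t ht => fderiv_eq_zero_of_rightMoving_of_leftMoving ha.ne' ?_ ?_,
    fun x hx t ht => fderiv_eq_zero_of_rightMoving_of_leftMoving ha.ne' ?_ ?_⟩
  · exact rightMoving_eq_zero_of_initial_of_left ha hf₁ h₀₁ hr₁ hx ht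
      (by linarith [ht.2, div_nonneg (sub_nonneg.2 hx.1) ha.le])
  · exact leftMoving_eq_zero_of_transmission ha hf₁ hf₂ ⟨h₂, h₃⟩ h₀₁ h₀₂ hd₁ hl₂ hx ht
      (by linarith [ht.2, div_nonneg (sub_nonneg.2 (hx.2.trans h₃)) ha.le])
  · exact rightMoving_eq_zero_of_transmission ha hf₁ hf₂ ⟨h₁, h₂⟩ h₀₁ h₀₂ hc₂ hr₁ hx ht
      (by linarith [ht.2, div_nonneg (sub_nonneg.2 (h₁.trans hx.1)) ha.le])
  · exact leftMoving_eq_zero_of_initial_of_right ha hf₂ h₀₂ hl₂ hx ht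
      (by linarith [ht.2, div_nonneg (sub_nonneg.2 hx.2) ha.le])

end Systems

namespace IsWaveSolution

variable {a c d T₀ T₁ T x t : ℝ} {p q r : ℝ → ℝ → ℝ}

theorem mono (h : IsWaveSolution a c d T₀ T₁ p) {c' d' : ℝ} (hc : c ≤ c') (hd : d' ≤ d) :
    IsWaveSolution a c' d' T₀ T₁ p := by
  obtain ⟨U, hU, hsub, hC, hW⟩ := h
  have hI : Icc c' d' ⊆ Icc c d := Icc_subset_Icc hc hd
  exact ⟨U, hU, (prod_mono hI subset_rfl).trans hsub, hC, fun x hx => hW x (hI hx)⟩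

theorem contDiffAt (h : IsWaveSolution a c d T₀ T₁ p) (hx : x ∈ Icc c d) (ht : t ∈ Icc T₀ T₁) :
    ContDiffAt ℝ 2 (uncurry p) (x, t) := by
  obtain ⟨U, hU, hsub, hC, -⟩ := h
  exact hC.contDiffAt (hU.mem_nhds (hsub ⟨hx, ht⟩))

theorem differentiableAt (h : IsWaveSolution a c d T₀ T₁ p) (hx : x ∈ Icc c d)
    (ht : t ∈ Icc T₀ T₁) : DifferentiableAt ℝ (uncurry p) (x, t) :=
  (h.contDiffAt hx ht).differentiableAt two_ne_zero

theorem isWaveAt (h : IsWaveSolution a c d T₀ T₁ p) :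
    ∀ z ∈ Icc c d ×ˢ Icc T₀ T₁, IsWaveAt a (uncurry p) z := by
  rintro ⟨x, t⟩ ⟨hx, ht⟩
  have hC := h.contDiffAt hx ht
  obtain ⟨-, -, -, -, hW⟩ := h
  refine ⟨hC, ?_⟩
  rw [← hC.deriv_deriv_comp_prodMk_right, ← hC.deriv_deriv_comp_prodMk_left]
  exact hW x hx t ht

theorem isWaveAt_sub (hp : IsWaveSolution a c d T₀ T₁ p) (hq : IsWaveSolution a c d T₀ T₁ q) :
    ∀ z ∈ Icc c d ×ˢ Icc T₀ T₁, IsWaveAt a (uncurry p - uncurry q) z :=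
  fun z hz => (hp.isWaveAt z hz).sub (hq.isWaveAt z hz)

theorem fderiv_sub_eq_zero_of_initial (hp : IsWaveSolution a c d T₀ T₁ p)
    (hq : IsWaveSolution a c d T₀ T₁ q) (hcd : c < d) (hT : T₀ ≤ T₁)
    (h₀ : ∀ x ∈ Icc c d, p x T₀ = q x T₀)
    (h₁ : ∀ x ∈ Icc c d, deriv (fun s => p x s) T₀ = deriv (fun s => q x s) T₀) :
    ∀ x ∈ Icc c d, fderiv ℝ (uncurry p - uncurry q) (x, T₀) = 0 := by
  intro x hx
  have hpd := hp.differentiableAt hx ⟨le_rfl, hT⟩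
  have hqd := hq.differentiableAt hx ⟨le_rfl, hT⟩
  have hpx := hpd.hasFDerivAt.hasDerivAt_comp_prodMk_left.differentiableAt
  have hqx := hqd.hasFDerivAt.hasDerivAt_comp_prodMk_left.differentiableAt
  rw [fderiv_sub hpd hqd, sub_eq_zero]
  ext
  · simpa [hpd.fderiv_apply_one_zero, hqd.fderiv_apply_one_zero] using
      deriv_eq_of_eqOn_Icc hcd hx hpx hqx h₀
  · simpa [hpd.fderiv_apply_zero_one, hqd.fderiv_apply_zero_one] using h₁ x hx

theorem fderiv_sub_apply_zero_one_eq_zero (hp : IsWaveSolution a c d T₀ T₁ p)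
    (hq : IsWaveSolution a c d T₀ T₁ q) (hT : T₀ < T₁) (hx : x ∈ Icc c d)
    (h : ∀ t ∈ Icc T₀ T₁, p x t = q x t) :
    ∀ t ∈ Icc T₀ T₁, fderiv ℝ (uncurry p - uncurry q) (x, t) (0, 1) = 0 := by
  intro t ht
  have hpd := hp.differentiableAt hx ht
  have hqd := hq.differentiableAt hx ht
  rw [fderiv_sub hpd hqd, sub_apply, hpd.fderiv_apply_zero_one,
    hqd.fderiv_apply_zero_one, sub_eq_zero]
  exact deriv_eq_of_eqOn_Icc hT ht hpd.hasFDerivAt.hasDerivAt_comp_prodMk_right.differentiableAt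
    hqd.hasFDerivAt.hasDerivAt_comp_prodMk_right.differentiableAt h

theorem fderiv_sub_apply_one_zero_eq_zero (hp : IsWaveSolution a c d T₀ T₁ p)
    (hq : IsWaveSolution a c d T₀ T₁ q) (hx : x ∈ Icc c d)
    (h : ∀ t ∈ Icc T₀ T₁, deriv (fun y => p y t) x = deriv (fun y => q y t) x) :
    ∀ t ∈ Icc T₀ T₁, fderiv ℝ (uncurry p - uncurry q) (x, t) (1, 0) = 0 := by
  intro t ht
  have hpd := hp.differentiableAt hx ht
  have hqd := hq.differentiableAt hx ht
  rw [fderiv_sub hpd hqd, sub_apply, hpd.fderiv_apply_one_zero,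
    hqd.fderiv_apply_one_zero, sub_eq_zero]
  exact h t ht

theorem fderiv_sub_eq_zero_of_neumann (ha : 0 < a) (hp : IsWaveSolution a c d 0 T p)
    (hq : IsWaveSolution a c d 0 T q) (hcd : c < d) (hT : 0 ≤ T)
    (h₀ : ∀ x ∈ Icc c d, p x 0 = q x 0)
    (h₁ : ∀ x ∈ Icc c d, deriv (fun s => p x s) 0 = deriv (fun s => q x s) 0)
    (hc : ∀ t ∈ Icc 0 T, deriv (fun y => p y t) c = deriv (fun y => q y t) c)
    (hd : ∀ t ∈ Icc 0 T, deriv (fun y => p y t) d = deriv (fun y => q y t) d) :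
    ∀ x ∈ Icc c d, ∀ t ∈ Icc 0 T, fderiv ℝ (uncurry p - uncurry q) (x, t) = 0 :=
  fderiv_eq_zero_of_neumann ha hcd (hp.isWaveAt_sub hq)
    (hp.fderiv_sub_eq_zero_of_initial hq hcd hT h₀ h₁)
    (hp.fderiv_sub_apply_one_zero_eq_zero hq ⟨le_rfl, hcd.le⟩ hc)
    (hp.fderiv_sub_apply_one_zero_eq_zero hq ⟨hcd.le, le_rfl⟩ hd)

theorem fderiv_sub_eq_of_fderiv_sub_eq_zero (hp : IsWaveSolution a c d T₀ T₁ p)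
    (hq : IsWaveSolution a c d T₀ T₁ q) (hr : IsWaveSolution a c d T₀ T₁ r) (hx : x ∈ Icc c d)
    (ht : t ∈ Icc T₀ T₁) (h : fderiv ℝ (uncurry p - uncurry q) (x, t) = 0) :
    fderiv ℝ (uncurry p - uncurry r) (x, t) = fderiv ℝ (uncurry q - uncurry r) (x, t) := by
  have hpd := hp.differentiableAt hx ht
  have hqd := hq.differentiableAt hx ht
  have hrd := hr.differentiableAt hx ht
  rw [fderiv_sub hpd hqd, sub_eq_zero] at h
  rw [fderiv_sub hpd hrd, fderiv_sub hqd hrd, h]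

theorem eq_of_fderiv_sub_apply_zero_one_eq_zero (hp : IsWaveSolution a c d T₀ T₁ p)
    (hq : IsWaveSolution a c d T₀ T₁ q) (hx : x ∈ Icc c d)
    (h : ∀ t ∈ Icc T₀ T₁, fderiv ℝ (uncurry p - uncurry q) (x, t) (0, 1) = 0)
    (h₀ : p x T₀ = q x T₀) : ∀ t ∈ Icc T₀ T₁, p x t = q x t := by
  intro t ht
  have hderiv : ∀ s ∈ Icc T₀ t, HasDerivAt (fun s => p x s - q x s) 0 s := by
    intro s hs
    have hsT : s ∈ Icc T₀ T₁ := ⟨hs.1, hs.2.trans ht.2⟩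
    have hpd := hp.differentiableAt hx hsT
    have hqd := hq.differentiableAt hx hsT
    have hD := (hpd.hasFDerivAt.sub hqd.hasFDerivAt).hasDerivAt_comp_prodMk_right
    rwa [← fderiv_sub hpd hqd, h s hsT] at hD
  have hconst := eq_of_hasDerivAt_zero ht.1 hderiv
  rwa [h₀, sub_self, sub_eq_zero] at hconst

end IsWaveSolution

/-- Decomposition Theorem (N = 2): if the two overlapping sub-domain solutions
match the true solution's initial data and outer Dirichlet data, and their
fluxes match at the two input boundaries, then each equals the true solution. -/
theorem decomposition_theorem_two_subdomains
    (a T X_A X1A X2A X1B X2B X_B : ℝ)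
    (ha : 0 < a) (hT : 0 < T)
    (hA : X_A = X1A) (h1 : X1A < X2A) (h2 : X2A < X1B) (h3 : X1B < X2B)
    (hB : X2B = X_B)
    (u p₁ p₂ : ℝ → ℝ → ℝ)
    (hu : IsWaveSolution a X_A X_B 0 T u)
    (hp₁ : IsWaveSolution a X1A X1B 0 T p₁)
    (hp₂ : IsWaveSolution a X2A X2B 0 T p₂)
    (hinit₁ : ∀ x ∈ Set.Icc X1A X1B, p₁ x 0 = u x 0)
    (hinit₁' : ∀ x ∈ Set.Icc X1A X1B,
      deriv (fun s => p₁ x s) 0 = deriv (fun s => u x s) 0)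
    (hinit₂ : ∀ x ∈ Set.Icc X2A X2B, p₂ x 0 = u x 0)
    (hinit₂' : ∀ x ∈ Set.Icc X2A X2B,
      deriv (fun s => p₂ x s) 0 = deriv (fun s => u x s) 0)
    (hDir₁ : ∀ t ∈ Set.Icc (0 : ℝ) T, p₁ X1A t = u X1A t)
    (hDir₂ : ∀ t ∈ Set.Icc (0 : ℝ) T, p₂ X2B t = u X2B t)
    (hflux₁ : ∀ t ∈ Set.Icc (0 : ℝ) T,
      deriv (fun y => p₁ y t) X1B = deriv (fun y => p₂ y t) X1B)
    (hflux₂ : ∀ t ∈ Set.Icc (0 : ℝ) T,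
      deriv (fun y => p₂ y t) X2A = deriv (fun y => p₁ y t) X2A) :
    (∀ x ∈ Set.Icc X1A X1B, ∀ t ∈ Set.Icc (0 : ℝ) T, p₁ x t = u x t) ∧
    (∀ x ∈ Set.Icc X2A X2B, ∀ t ∈ Set.Icc (0 : ℝ) T, p₂ x t = u x t) := by
  subst X_A X_B
  have hu₁ := hu.mono le_rfl h3.le
  have hu₂ := hu.mono h1.le le_rfl
  have hu₀ := hu.mono h1.le h3.le
  have hp₁₀ := hp₁.mono h1.le le_rfl
  have hp₂₀ := hp₂.mono le_rfl h3.le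
  have hX2A : X2A ∈ Icc X2A X1B := ⟨le_rfl, h2.le⟩
  have hX1B : X1B ∈ Icc X2A X1B := ⟨h2.le, le_rfl⟩
  have hI₁ : Icc X2A X1B ⊆ Icc X1A X1B := Icc_subset_Icc h1.le le_rfl
  have hI₂ : Icc X2A X1B ⊆ Icc X2A X2B := Icc_subset_Icc le_rfl h3.le
  have hover := hp₁₀.fderiv_sub_eq_zero_of_neumann ha hp₂₀ h2 hT.le
    (fun x hx => (hinit₁ x (hI₁ hx)).trans (hinit₂ x (hI₂ hx)).symm)
    (fun x hx => (hinit₁' x (hI₁ hx)).trans (hinit₂' x (hI₂ hx)).symm)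
    (fun t ht => (hflux₂ t ht).symm) hflux₁
  obtain ⟨hw₁, hw₂⟩ := fderiv_eq_zero_of_dirichlet_of_transmission ha h1.le h2.le h3.le
    (h1.trans (h2.trans h3)) (hp₁.isWaveAt_sub hu₁) (hp₂.isWaveAt_sub hu₂)
    (hp₁.fderiv_sub_eq_zero_of_initial hu₁ (h1.trans h2) hT.le hinit₁ hinit₁')
    (hp₂.fderiv_sub_eq_zero_of_initial hu₂ (h2.trans h3) hT.le hinit₂ hinit₂')
    (hp₁.fderiv_sub_apply_zero_one_eq_zero hu₁ hT ⟨le_rfl, (h1.trans h2).le⟩ hDir₁)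
    (hp₂.fderiv_sub_apply_zero_one_eq_zero hu₂ hT ⟨(h2.trans h3).le, le_rfl⟩ hDir₂)
    (fun s hs => hp₁₀.fderiv_sub_eq_of_fderiv_sub_eq_zero hp₂₀ hu₀ hX1B hs (hover X1B hX1B s hs))
    (fun s hs => (hp₁₀.fderiv_sub_eq_of_fderiv_sub_eq_zero hp₂₀ hu₀ hX2A hs
      (hover X2A hX2A s hs)).symm)
  exact ⟨fun x hx => hp₁.eq_of_fderiv_sub_apply_zero_one_eq_zero hu₁ hx
      (fun t ht => by rw [hw₁ x hx t ht]; rfl) (hinit₁ x hx),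
    fun x hx => hp₂.eq_of_fderiv_sub_apply_zero_one_eq_zero hu₂ hx
      (fun t ht => by rw [hw₂ x hx t ht]; rfl) (hinit₂ x hx)⟩
end

section
/- (Prediction Validation Theorem, left sub-domain.) Let a > 0, T_s ∈ ℝ, τ > 0, and X_A = X_{1A} < X_{2A} < X_{1B} < X_{2B} = X_B. Let u be a classical solution of the 1-D wave equation with speed a on [X_A, X_B] × [T_s, T_s + τ]. Let p̂₁ be a classical solution of the 1-D wave equation with speed a on [X_{1A}, X_{1B}] × [T_s, T_s + τ] satisfying the predictive problem: p̂₁(x, T_s) = u(x, T_s) and ∂p̂₁/∂t(x, T_s) = ∂u/∂t(x, T_s) for all x ∈ [X_{1A}, X_{1B}]; p̂₁(X_{1A}, t) = u(X_{1A}, t) for all t ∈ [T_s, T_s + τ]; and the zero-flux prediction ∂p̂₁/∂x(X_{1B}, t) = 0 for all t ∈ [T_s, T_s + τ]. Then p̂₁(x,t) = u(x,t) for every (x,t) with x ∈ [X_{1A}, X_{1B}], t ∈ [T_s, T_s + τ] and a·(t − T_s) ≤ X_{1B} − x; in particular, at the output boundary x = X_{2A} one has p̂₁(X_{2A}, t)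 = u(X_{2A}, t) and ∂p̂₁/∂x(X_{2A}, t) = ∂u/∂x(X_{2A}, t) for all t ∈ [T_s, T_s + τ] with a·(t − T_s) ≤ X_{1B} − X_{2A}. -/
open Set Topology

section Calculus

variable {F G : ℝ × ℝ → ℝ} {q : ℝ × ℝ}

lemma ContDiffAt.differentiableAt_fderiv (hF : ContDiffAt ℝ 2 F q) :
    DifferentiableAt ℝ (fderiv ℝ F) q :=
  (hF.fderiv_right (m := 1) (by norm_num)).differentiableAt (by norm_num)

lemma HasDerivAt.hasDerivAt_fderiv_apply_comp {c : ℝ → ℝ × ℝ} {v : ℝ × ℝ} {s : ℝ}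
    (hc : HasDerivAt c v s) (hF : ContDiffAt ℝ 2 F (c s)) (w : ℝ × ℝ) :
    HasDerivAt (fun r => fderiv ℝ F (c r) w) (fderiv ℝ (fderiv ℝ F) (c s) v w) s := by
  simpa using (hF.differentiableAt_fderiv.hasFDerivAt.comp_hasDerivAt s hc).clm_apply
    (hasDerivAt_const s w)

lemma DifferentiableAt.hasDerivAt_slice_snd {x t : ℝ} (hF : DifferentiableAt ℝ F (x, t)) :
    HasDerivAt (fun s => F (x, s)) (fderiv ℝ F (x, t) (0, 1)) t :=
  hF.hasFDerivAt.comp_hasDerivAt t ((hasDerivAt_const t x).prodMk (hasDerivAt_id t))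

lemma DifferentiableAt.hasDerivAt_slice_fst {x t : ℝ} (hF : DifferentiableAt ℝ F (x, t)) :
    HasDerivAt (fun y => F (y, t)) (fderiv ℝ F (x, t) (1, 0)) x :=
  hF.hasFDerivAt.comp_hasDerivAt x ((hasDerivAt_id x).prodMk (hasDerivAt_const x t))

lemma ContDiffAt.deriv_deriv_slice_snd {x t : ℝ} (hF : ContDiffAt ℝ 2 F (x, t)) :
    deriv (deriv fun s => F (x, s)) t = fderiv ℝ (fderiv ℝ F) (x, t) (0, 1) (0, 1) := by
  have hline : HasDerivAt (fun s : ℝ => (x, s)) ((0 : ℝ), (1 : ℝ)) t :=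
    (hasDerivAt_const t x).prodMk (hasDerivAt_id t)
  have hnear : ∀ᶠ s in 𝓝 t, ContDiffAt ℝ 2 F (x, s) :=
    hline.continuousAt.eventually (hF.eventually (by simp))
  have hslice : deriv (fun s => F (x, s)) =ᶠ[𝓝 t] fun s => fderiv ℝ F (x, s) (0, 1) := by
    filter_upwards [hnear] with s hs
    exact (hs.differentiableAt (by norm_num)).hasDerivAt_slice_snd.deriv
  rw [hslice.deriv_eq]
  exact (hline.hasDerivAt_fderiv_apply_comp hF _).deriv

lemma ContDiffAt.deriv_deriv_slice_fst {x t : ℝ} (hF : ContDiffAt ℝ 2 F (x, t)) :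
    deriv (deriv fun y => F (y, t)) x = fderiv ℝ (fderiv ℝ F) (x, t) (1, 0) (1, 0) := by
  have hline : HasDerivAt (fun y : ℝ => (y, t)) ((1 : ℝ), (0 : ℝ)) x :=
    (hasDerivAt_id x).prodMk (hasDerivAt_const x t)
  have hnear : ∀ᶠ y in 𝓝 x, ContDiffAt ℝ 2 F (y, t) :=
    hline.continuousAt.eventually (hF.eventually (by simp))
  have hslice : deriv (fun y => F (y, t)) =ᶠ[𝓝 x] fun y => fderiv ℝ F (y, t) (1, 0) := by
    filter_upwards [hnear] with y hy
    exact (hy.differentiableAt (by norm_num)).hasDerivAt_slice_fst.deriv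
  rw [hslice.deriv_eq]
  exact (hline.hasDerivAt_fderiv_apply_comp hF _).deriv

lemma ContDiffAt.fderiv_fderiv_sub (hF : ContDiffAt ℝ 2 F q) (hG : ContDiffAt ℝ 2 G q) :
    fderiv ℝ (fderiv ℝ fun p => F p - G p) q
      = fderiv ℝ (fderiv ℝ F) q - fderiv ℝ (fderiv ℝ G) q := by
  have hnear : ∀ᶠ p in 𝓝 q, ContDiffAt ℝ 2 F p ∧ ContDiffAt ℝ 2 G p :=
    (hF.eventually (by simp)).and (hG.eventually (by simp))
  have hsub : fderiv ℝ (fun p => F p - G p) =ᶠ[𝓝 q] fun p => fderiv ℝ F p - fderiv ℝ G p := by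
    filter_upwards [hnear] with p ⟨hFp, hGp⟩
    exact fderiv_fun_sub (hFp.differentiableAt (by norm_num)) (hGp.differentiableAt (by norm_num))
  rw [hsub.fderiv_eq, fderiv_fun_sub hF.differentiableAt_fderiv hG.differentiableAt_fderiv]

lemma eq_of_forall_hasDerivAt_zero {f : ℝ → ℝ} {a b : ℝ} (hab : a ≤ b)
    (hf : ∀ s ∈ Icc a b, HasDerivAt f 0 s) : f b = f a :=
  constant_of_has_deriv_right_zero (fun s hs => (hf s hs).continuousAt.continuousWithinAt)
    (fun s hs => (hf s (Ico_subset_Icc_self hs)).hasDerivWithinAt) b (right_mem_Icc.2 hab)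

lemma HasDerivAt.eq_zero_of_eqOn_Icc {f : ℝ → ℝ} {f' a b x : ℝ} (hf : HasDerivAt f f' x)
    (hab : a < b) (hx : x ∈ Icc a b) (h : ∀ y ∈ Icc a b, f y = 0) : f' = 0 :=
  (uniqueDiffOn_Icc hab x hx).eq_deriv _ hf.hasDerivWithinAt
    ((hasDerivWithinAt_const x _ 0).congr h (h x hx))

end Calculus

/-- `ContDiffAt` at every point of `K` amounts to being `C²` on an open neighbourhood of `K`. -/
def IsWaveSolutionOn (a : ℝ) (K : Set (ℝ × ℝ)) (F : ℝ × ℝ → ℝ) : Prop :=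
  ∀ q ∈ K, ContDiffAt ℝ 2 F q ∧
    fderiv ℝ (fderiv ℝ F) q (0, 1) (0, 1) = a ^ 2 * fderiv ℝ (fderiv ℝ F) q (1, 0) (1, 0)

noncomputable def riemannInvariant (c : ℝ) (F : ℝ × ℝ → ℝ) (q : ℝ × ℝ) : ℝ :=
  fderiv ℝ F q (0, 1) - c * fderiv ℝ F q (1, 0)

lemma IsWaveSolution.isWaveSolutionOn {a c d T₀ T₁ : ℝ} {p : ℝ → ℝ → ℝ}
    (hp : IsWaveSolution a c d T₀ T₁ p) :
    IsWaveSolutionOn a (Icc c d ×ˢ Icc T₀ T₁) fun q => p q.1 q.2 := by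
  obtain ⟨U, hU, hKU, hpU, hwave⟩ := hp
  rintro ⟨x, t⟩ ⟨hx, ht⟩
  have hpq := hpU.contDiffAt (hU.mem_nhds (hKU ⟨hx, ht⟩))
  refine ⟨hpq, ?_⟩
  rw [← hpq.deriv_deriv_slice_snd, ← hpq.deriv_deriv_slice_fst]
  exact hwave x hx t ht

namespace IsWaveSolutionOn

variable {a : ℝ} {K K' : Set (ℝ × ℝ)} {F G : ℝ × ℝ → ℝ}

lemma mono (hF : IsWaveSolutionOn a K F) (h : K' ⊆ K) : IsWaveSolutionOn a K' F :=
  fun q hq => hF q (h hq)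

lemma sub (hF : IsWaveSolutionOn a K F) (hG : IsWaveSolutionOn a K G) :
    IsWaveSolutionOn a K fun q => F q - G q := by
  intro q hq
  obtain ⟨hFq, hFwave⟩ := hF q hq
  obtain ⟨hGq, hGwave⟩ := hG q hq
  refine ⟨hFq.sub hGq, ?_⟩
  simp only [hFq.fderiv_fderiv_sub hGq, sub_apply, hFwave, hGwave]
  ring

lemma riemannInvariant_eq_of_characteristic (hF : IsWaveSolutionOn a K F) {c : ℝ}
    (hc : c ^ 2 = a ^ 2) {x₀ t₀ t₁ : ℝ} (ht : t₀ ≤ t₁)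
    (hpath : ∀ s ∈ Icc t₀ t₁, (x₀ + c * (s - t₀), s) ∈ K) :
    riemannInvariant c F (x₀ + c * (t₁ - t₀), t₁) = riemannInvariant c F (x₀, t₀) := by
  suffices ∀ s ∈ Icc t₀ t₁,
      HasDerivAt (fun s => riemannInvariant c F (x₀ + c * (s - t₀), s)) 0 s by
    simpa only [sub_self, mul_zero, add_zero] using eq_of_forall_hasDerivAt_zero ht this
  intro s hs
  obtain ⟨hFs, hwave⟩ := hF _ (hpath s hs)
  have hline : HasDerivAt (fun r : ℝ => (x₀ + c * (r - t₀), r)) (c, (1 : ℝ)) s := by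
    refine HasDerivAt.prodMk ?_ (hasDerivAt_id s)
    simpa using (((hasDerivAt_id s).sub_const t₀).const_mul c).const_add x₀
  have hderiv := (hline.hasDerivAt_fderiv_apply_comp hFs (0, 1)).fun_sub
    ((hline.hasDerivAt_fderiv_apply_comp hFs (1, 0)).const_mul c)
  set A := fderiv ℝ (fderiv ℝ F) (x₀ + c * (s - t₀), s)
  have hA : A (c, 1) (0, 1) - c * A (c, 1) (1, 0) = 0 := by
    have hsymm : A (1, 0) (0, 1) = A (0, 1) (1, 0) := hFs.isSymmSndFDerivAt (by simp) _ _
    have hdecomp : ((c, 1) : ℝ × ℝ) = c • ((1 : ℝ), (0 : ℝ)) + ((0 : ℝ), (1 : ℝ)) := by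
      ext <;> simp
    rw [hdecomp, map_add, map_smul]
    simp only [add_apply, smul_apply, smul_eq_mul]
    rw [hwave, hsymm, ← hc]
    ring
  simpa only [riemannInvariant, hA] using hderiv

section DomainOfDependence

variable {XA XB Ts Te : ℝ} {W : ℝ × ℝ → ℝ}

lemma riemannInvariant_neg_eq_zero (ha : 0 < a)
    (hW : IsWaveSolutionOn a (Icc XA XB ×ˢ Icc Ts Te) W)
    (h0 : ∀ x ∈ Icc XA XB, riemannInvariant (-a) W (x, Ts) = 0) {x t : ℝ} (hx : XA ≤ x)
    (ht : t ∈ Icc Ts Te) (hcone : a * (t - Ts) ≤ XB - x) :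
    riemannInvariant (-a) W (x, t) = 0 := by
  have hchar := hW.riemannInvariant_eq_of_characteristic (neg_sq a) ht.1
    (x₀ := x + a * (t - Ts)) fun s hs =>
      mk_mem_prod ⟨by nlinarith [hs.2], by nlinarith [hs.1]⟩ ⟨hs.1, hs.2.trans ht.2⟩
  rw [show x + a * (t - Ts) + -a * (t - Ts) = x by ring] at hchar
  rw [hchar, h0 _ ⟨by nlinarith [ht.1], by linarith⟩]

lemma riemannInvariant_eq_zero (ha : 0 < a)
    (hW : IsWaveSolutionOn a (Icc XA XB ×ˢ Icc Ts Te) W)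
    (h0 : ∀ x ∈ Icc XA XB, riemannInvariant a W (x, Ts) = 0 ∧ riemannInvariant (-a) W (x, Ts) = 0)
    (hbd : ∀ t ∈ Icc Ts Te, fderiv ℝ W (XA, t) (0, 1) = 0) {x t : ℝ} (hx : XA ≤ x)
    (ht : t ∈ Icc Ts Te) (hcone : a * (t - Ts) ≤ XB - x) :
    riemannInvariant a W (x, t) = 0 := by
  -- the right-moving characteristic through `(x, t)` starts on `t = Ts` or on `x = XA`
  obtain ⟨t₁, ht₁, hfoot, hL⟩ : ∃ t₁ ∈ Icc Ts t,
      XA ≤ x - a * (t - t₁) ∧ riemannInvariant a W (x - a * (t - t₁), t₁) = 0 := by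
    rcases le_or_gt (a * (t - Ts)) (x - XA) with hreach | hreflect
    · exact ⟨Ts, ⟨le_rfl, ht.1⟩, by linarith, (h0 _ ⟨by linarith, by nlinarith [ht.1]⟩).1⟩
    · set t₁ := t - (x - XA) / a
      have hx₁ : x - a * (t - t₁) = XA := by simp only [t₁]; field_simp; ring
      have ht₁ : t₁ ∈ Icc Ts t := ⟨by nlinarith, by nlinarith⟩
      refine ⟨t₁, ht₁, hx₁.ge, ?_⟩
      -- on the boundary `∂ₜW = 0`, so the two Riemann invariants are opposite
      have hR := riemannInvariant_neg_eq_zero ha hW (fun x hx => (h0 x hx).2) le_rfl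
        ⟨ht₁.1, ht₁.2.trans ht.2⟩ (by nlinarith [ht₁.2])
      have hWt := hbd t₁ ⟨ht₁.1, ht₁.2.trans ht.2⟩
      rw [hx₁]
      simp only [riemannInvariant] at hR ⊢
      linarith
  have hchar := hW.riemannInvariant_eq_of_characteristic rfl ht₁.2
    (x₀ := x - a * (t - t₁)) fun s hs =>
      mk_mem_prod ⟨by nlinarith [hs.1],
        by nlinarith [mul_nonneg ha.le (sub_nonneg.2 hs.2), mul_nonneg ha.le (sub_nonneg.2 ht.1)]⟩
        ⟨ht₁.1.trans hs.1, hs.2.trans ht.2⟩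
  rw [show x - a * (t - t₁) + a * (t - t₁) = x by ring] at hchar
  rw [hchar, hL]

lemma fderiv_apply_eq_zero (ha : 0 < a)
    (hW : IsWaveSolutionOn a (Icc XA XB ×ˢ Icc Ts Te) W)
    (h0 : ∀ x ∈ Icc XA XB, riemannInvariant a W (x, Ts) = 0 ∧ riemannInvariant (-a) W (x, Ts) = 0)
    (hbd : ∀ t ∈ Icc Ts Te, fderiv ℝ W (XA, t) (0, 1) = 0) {x t : ℝ} (hx : XA ≤ x)
    (ht : t ∈ Icc Ts Te) (hcone : a * (t - Ts) ≤ XB - x) :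
    fderiv ℝ W (x, t) (0, 1) = 0 ∧ fderiv ℝ W (x, t) (1, 0) = 0 := by
  have hL := riemannInvariant_eq_zero ha hW h0 hbd hx ht hcone
  have hR := riemannInvariant_neg_eq_zero ha hW (fun x hx => (h0 x hx).2) hx ht hcone
  simp only [riemannInvariant] at hL hR
  refine ⟨by linarith, ?_⟩
  have hWx : a * fderiv ℝ W (x, t) (1, 0) = 0 := by linarith
  exact (mul_eq_zero.1 hWx).resolve_left ha.ne'

lemma eq_zero_of_zero_data (ha : 0 < a) (hX : XA < XB) (hT : Ts < Te)
    (hW : IsWaveSolutionOn a (Icc XA XB ×ˢ Icc Ts Te) W)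
    (h0 : ∀ x ∈ Icc XA XB, W (x, Ts) = 0) (h0' : ∀ x ∈ Icc XA XB, fderiv ℝ W (x, Ts) (0, 1) = 0)
    (hbd : ∀ t ∈ Icc Ts Te, W (XA, t) = 0) {x t : ℝ} (hx : x ∈ Icc XA XB)
    (ht : t ∈ Icc Ts Te) (hcone : a * (t - Ts) ≤ XB - x) :
    W (x, t) = 0 ∧ fderiv ℝ W (x, t) (1, 0) = 0 := by
  have hdiff : ∀ q ∈ Icc XA XB ×ˢ Icc Ts Te, DifferentiableAt ℝ W q :=
    fun q hq => (hW q hq).1.differentiableAt (by norm_num)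
  have hWx0 : ∀ x ∈ Icc XA XB, fderiv ℝ W (x, Ts) (1, 0) = 0 := fun x hx =>
    (hdiff _ (mk_mem_prod hx (left_mem_Icc.2 hT.le))).hasDerivAt_slice_fst.eq_zero_of_eqOn_Icc
      hX hx h0
  have hWt_bd : ∀ t ∈ Icc Ts Te, fderiv ℝ W (XA, t) (0, 1) = 0 := fun t ht =>
    (hdiff _ (mk_mem_prod (left_mem_Icc.2 hX.le) ht)).hasDerivAt_slice_snd.eq_zero_of_eqOn_Icc
      hT ht hbd
  have hinit : ∀ x ∈ Icc XA XB,
      riemannInvariant a W (x, Ts) = 0 ∧ riemannInvariant (-a) W (x, Ts) = 0 := fun x hx => by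
    simp [riemannInvariant, h0' x hx, hWx0 x hx]
  have hgrad : ∀ s ∈ Icc Ts t, fderiv ℝ W (x, s) (0, 1) = 0 ∧ fderiv ℝ W (x, s) (1, 0) = 0 :=
    fun s hs => fderiv_apply_eq_zero ha hW hinit hWt_bd hx.1 ⟨hs.1, hs.2.trans ht.2⟩
      (by nlinarith [hs.2])
  refine ⟨?_, (hgrad t ⟨ht.1, le_rfl⟩).2⟩
  rw [← h0 x hx]
  refine eq_of_forall_hasDerivAt_zero (f := fun s => W (x, s)) ht.1 fun s hs => ?_
  simpa only [(hgrad s hs).1] using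
    (hdiff _ (mk_mem_prod hx ⟨hs.1, hs.2.trans ht.2⟩)).hasDerivAt_slice_snd

theorem eq_of_eq_data (hF : IsWaveSolutionOn a (Icc XA XB ×ˢ Icc Ts Te) F)
    (hG : IsWaveSolutionOn a (Icc XA XB ×ˢ Icc Ts Te) G) (ha : 0 < a) (hX : XA < XB) (hT : Ts < Te)
    (h0 : ∀ x ∈ Icc XA XB, F (x, Ts) = G (x, Ts))
    (h0' : ∀ x ∈ Icc XA XB, deriv (fun s => F (x, s)) Ts = deriv (fun s => G (x, s)) Ts)
    (hbd : ∀ t ∈ Icc Ts Te, F (XA, t) = G (XA, t)) {x t : ℝ} (hx : x ∈ Icc XA XB)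
    (ht : t ∈ Icc Ts Te) (hcone : a * (t - Ts) ≤ XB - x) :
    F (x, t) = G (x, t) ∧ deriv (fun y => F (y, t)) x = deriv (fun y => G (y, t)) x := by
  have hdiff : ∀ q ∈ Icc XA XB ×ˢ Icc Ts Te, DifferentiableAt ℝ F q ∧ DifferentiableAt ℝ G q :=
    fun q hq => ⟨(hF q hq).1.differentiableAt (by norm_num),
      (hG q hq).1.differentiableAt (by norm_num)⟩
  have hsub : ∀ q ∈ Icc XA XB ×ˢ Icc Ts Te, ∀ v,
      fderiv ℝ (fun p => F p - G p) q v = fderiv ℝ F q v - fderiv ℝ G q v := fun q hq v => by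
    rw [fderiv_fun_sub (hdiff q hq).1 (hdiff q hq).2, sub_apply]
  have hvel : ∀ x ∈ Icc XA XB, fderiv ℝ (fun p => F p - G p) (x, Ts) (0, 1) = 0 := by
    intro x hx
    have hq := mk_mem_prod hx (left_mem_Icc.2 hT.le)
    rw [hsub _ hq, ← (hdiff _ hq).1.hasDerivAt_slice_snd.deriv,
      ← (hdiff _ hq).2.hasDerivAt_slice_snd.deriv, h0' x hx, sub_self]
  obtain ⟨hW, hWx⟩ := (hF.sub hG).eq_zero_of_zero_data ha hX hT
    (fun x hx => sub_eq_zero.2 (h0 x hx)) hvel (fun t ht => sub_eq_zero.2 (hbd t ht)) hx ht hcone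
  have hq := mk_mem_prod hx ht
  rw [hsub _ hq, sub_eq_zero] at hWx
  rw [(hdiff _ hq).1.hasDerivAt_slice_fst.deriv, (hdiff _ hq).2.hasDerivAt_slice_fst.deriv]
  exact ⟨sub_eq_zero.1 hW, hWx⟩

end DomainOfDependence

end IsWaveSolutionOn

theorem prediction_validation_left_general
    (a T_s τ X_A X1A X2A X1B X2B X_B : ℝ)
    (ha : 0 < a) (hτ : 0 < τ)
    (hA : X_A = X1A) (h1 : X1A < X2A) (h2 : X2A < X1B) (h3 : X1B < X2B)
    (hB : X2B = X_B)
    (u phat₁ : ℝ → ℝ → ℝ)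
    (hu : IsWaveSolution a X_A X_B T_s (T_s + τ) u)
    (hp : IsWaveSolution a X1A X1B T_s (T_s + τ) phat₁)
    (hinit : ∀ x ∈ Set.Icc X1A X1B, phat₁ x T_s = u x T_s)
    (hinit' : ∀ x ∈ Set.Icc X1A X1B,
      deriv (fun s => phat₁ x s) T_s = deriv (fun s => u x s) T_s)
    (hDir : ∀ t ∈ Set.Icc T_s (T_s + τ), phat₁ X1A t = u X1A t) :
    (∀ x ∈ Set.Icc X1A X1B, ∀ t ∈ Set.Icc T_s (T_s + τ),
      a * (t - T_s) ≤ X1B - x → phat₁ x t = u x t) ∧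
    (∀ t ∈ Set.Icc T_s (T_s + τ), a * (t - T_s) ≤ X1B - X2A →
      phat₁ X2A t = u X2A t ∧
      deriv (fun y => phat₁ y t) X2A = deriv (fun y => u y t) X2A) := by
  have hK : Icc X1A X1B ×ˢ Icc T_s (T_s + τ) ⊆ Icc X_A X_B ×ˢ Icc T_s (T_s + τ) :=
    prod_mono (Icc_subset_Icc hA.le (by linarith)) subset_rfl
  have hcone := fun x (hx : x ∈ Icc X1A X1B) t (ht : t ∈ Icc T_s (T_s + τ)) =>
    hp.isWaveSolutionOn.eq_of_eq_data (hu.isWaveSolutionOn.mono hK) ha (h1.trans h2)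
      (by linarith) hinit hinit' hDir hx ht
  exact ⟨fun x hx t ht hxt => (hcone x hx t ht hxt).1,
    fun t ht hxt => hcone X2A ⟨h1.le, h2.le⟩ t ht hxt⟩

/-- Prediction Validation Theorem, left sub-domain: the zero-flux predictive
solution on Ω₁ agrees with the true solution wherever the backward light cone
does not reach the input boundary x = X₁B; in particular its value and output
flux at the output boundary x = X₂A agree with the true solution's for
a·(t − Tₛ) ≤ X₁B − X₂A. -/
theorem prediction_validation_left
    (a T_s τ X_A X1A X2A X1B X2B X_B : ℝ)
    (ha : 0 < a) (hτ : 0 < τ)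
    (hA : X_A = X1A) (h1 : X1A < X2A) (h2 : X2A < X1B) (h3 : X1B < X2B)
    (hB : X2B = X_B)
    (u phat₁ : ℝ → ℝ → ℝ)
    (hu : IsWaveSolution a X_A X_B T_s (T_s + τ) u)
    (hp : IsWaveSolution a X1A X1B T_s (T_s + τ) phat₁)
    (hinit : ∀ x ∈ Set.Icc X1A X1B, phat₁ x T_s = u x T_s)
    (hinit' : ∀ x ∈ Set.Icc X1A X1B,
      deriv (fun s => phat₁ x s) T_s = deriv (fun s => u x s) T_s)
    (hDir : ∀ t ∈ Set.Icc T_s (T_s + τ), phat₁ X1A t = u X1A t)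
    (hzero : ∀ t ∈ Set.Icc T_s (T_s + τ), deriv (fun y => phat₁ y t) X1B = 0) :
    (∀ x ∈ Set.Icc X1A X1B, ∀ t ∈ Set.Icc T_s (T_s + τ),
      a * (t - T_s) ≤ X1B - x → phat₁ x t = u x t) ∧
    (∀ t ∈ Set.Icc T_s (T_s + τ), a * (t - T_s) ≤ X1B - X2A →
      phat₁ X2A t = u X2A t ∧
      deriv (fun y => phat₁ y t) X2A = deriv (fun y => u y t) X2A) :=
  prediction_validation_left_general a T_s τ X_A X1A X2A X1B X2B X_B ha hτ hA h1 h2 h3 hB u phat₁ hu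
    hp hinit hinit' hDir
end
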